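/- arXiv:2203.16752 — 2 statements merged into one kernel-verified Lean document; each statement's English description precedes it below -/
import Mathlib

section
/- Let d ≥ 2, m ≥ 2, and w = (w_1,…,w_d) ∈ 𝒫̇_m(ℝ^d)^d. Then (w,0) ∈ Ṡ_m(ℝ^d_+) if and only if w_d = 0 and there exist a^{(1)},…,a^{(d-1)} ∈ 𝒫̇_{m-1}(ℝ^{d-1}) with ∂_1 a^{(1)} + ⋯ + ∂_{d-1} a^{(d-1)} = 0 such that w_i(x,y) = Σ_{j≥0} ((−1)^j/(2j+1)!) ((Δ')^j a^{(i)})(x) y^{2j+1} for i = 1,…,d−1 (finite sums). -/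
open MvPolynomial

noncomputable section

/-- The horizontal Laplacian `Δ' = ∂_1² + ⋯ + ∂_{d-1}²` acting on polynomials on
`ℝ^d = ℝ^{n+1}`, where the last variable is `y`. -/
def lapX (n : ℕ) : Module.End ℝ (MvPolynomial (Fin (n + 1)) ℝ) :=
  ∑ i : Fin n,
    ((pderiv (R := ℝ) i.castSucc).toLinearMap ∘ₗ (pderiv (R := ℝ) i.castSucc).toLinearMap)

/-- The full Laplacian `Δ = Δ' + ∂_y²`. -/
def lapFull (n : ℕ) : Module.End ℝ (MvPolynomial (Fin (n + 1)) ℝ) :=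
  lapX n +
    ((pderiv (R := ℝ) (Fin.last n)).toLinearMap ∘ₗ (pderiv (R := ℝ) (Fin.last n)).toLinearMap)

/-- `(u,p) ∈ Ṡ_m(ℝ^d_+)`: `u ∈ 𝒫̇_m(ℝ^d)^d`, `p ∈ 𝒫̇_{m-1}(ℝ^d)`, and `(u,p)` solves the
Stokes system (SH): `-Δu + ∇p = 0`, `∇·u = 0` (in `ℝ^d_+`, equivalently as polynomial
identities), and `u(x,0) = 0` for all `x ∈ ℝ^{d-1}`. -/
def IsDotStokes (n m : ℕ) (u : Fin (n + 1) → MvPolynomial (Fin (n + 1)) ℝ)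
    (p : MvPolynomial (Fin (n + 1)) ℝ) : Prop :=
  (∀ k, (u k).IsHomogeneous m) ∧ p.IsHomogeneous (m - 1) ∧
  (∀ k, - lapFull n (u k) + pderiv (R := ℝ) k p = 0) ∧
  (∑ k : Fin (n + 1), pderiv (R := ℝ) k (u k)) = 0 ∧
  (∀ (x : Fin n → ℝ) (k : Fin (n + 1)), eval (Fin.snoc x 0) (u k) = 0)

/-! ### Auxiliary machinery -/

/-- Equivalence with polynomials in the last variable `y` over `MvPolynomial (Fin n) ℝ`. -/
def eE (n : ℕ) : MvPolynomial (Fin (n+1)) ℝ ≃ₐ[ℝ] Polynomial (MvPolynomial (Fin n) ℝ) :=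
  (renameEquiv ℝ (finRotate (n+1))).trans (MvPolynomial.finSuccEquiv ℝ n)

lemma eE_X_last (n : ℕ) : eE n (X (Fin.last n)) = Polynomial.X := by
  simp [eE, finRotate_last, finSuccEquiv_X_zero]

lemma eE_X_castSucc {n : ℕ} (i : Fin n) : eE n (X i.castSucc) = Polynomial.C (X i) := by
  simp [eE, finRotate_succ_apply, Fin.coeSucc_eq_succ, finSuccEquiv_X_succ]

lemma eE_rename {n : ℕ} (q : MvPolynomial (Fin n) ℝ) :
    eE n (rename Fin.castSucc q) = Polynomial.C q := by
  induction q using MvPolynomial.induction_on with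
  | C a => simp [eE, finSuccEquiv_apply]
  | add p q hp hq => simp [hp, hq]
  | mul_X p i hp => simp [hp, eE_X_castSucc]

lemma eE_basic {n : ℕ} (q : MvPolynomial (Fin n) ℝ) (k : ℕ) :
    eE n (rename Fin.castSucc q * X (Fin.last n) ^ k) = Polynomial.C q * Polynomial.X ^ k := by
  rw [map_mul, map_pow, eE_rename, eE_X_last]

/-- Custom induction principle: polynomials on `ℝ^{n+1}` are spanned by
`q(x) yᵏ` for `q` a polynomial in the horizontal variables. -/
lemma my_induction {n : ℕ} {M : MvPolynomial (Fin (n+1)) ℝ → Prop}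
    (hadd : ∀ P Q, M P → M Q → M (P + Q))
    (hmono : ∀ (q : MvPolynomial (Fin n) ℝ) (k : ℕ),
      M (rename Fin.castSucc q * X (Fin.last n) ^ k)) :
    ∀ P, M P := by
  intro P
  have h : P = (eE n).symm (eE n P) := by simp
  rw [h]; generalize eE n P = Q
  induction Q using Polynomial.induction_on' with
  | add p q hp hq => rw [map_add]; exact hadd _ _ hp hq
  | monomial k a =>
    have : (eE n).symm (Polynomial.monomial k a)
        = rename Fin.castSucc a * X (Fin.last n) ^ k := by
      apply (eE n).injective
      rw [AlgEquiv.apply_symm_apply, eE_basic, Polynomial.C_mul_X_pow_eq_monomial]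
    rw [this]; exact hmono a k

/-- The `l`-th Taylor coefficient in `y` (as a linear map). -/
def cc (n l : ℕ) : MvPolynomial (Fin (n+1)) ℝ →ₗ[ℝ] MvPolynomial (Fin n) ℝ where
  toFun P := (eE n P).coeff l
  map_add' P Q := by simp
  map_smul' r P := by simp [Polynomial.coeff_smul]

lemma cc_apply {n : ℕ} (l : ℕ) (P : MvPolynomial (Fin (n+1)) ℝ) :
    cc n l P = (eE n P).coeff l := rfl

lemma cc_basic {n : ℕ} (l : ℕ) (q : MvPolynomial (Fin n) ℝ) (k : ℕ) :
    cc n l (rename Fin.castSucc q * X (Fin.last n) ^ k) = if l = k then q else 0 := by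
  rw [cc_apply, eE_basic, Polynomial.coeff_C_mul, Polynomial.coeff_X_pow]
  split <;> simp_all

lemma cc_ext {n : ℕ} {P : MvPolynomial (Fin (n+1)) ℝ} (h : ∀ l, cc n l P = 0) : P = 0 := by
  have : eE n P = 0 := Polynomial.ext fun l => h l
  simpa using (eE n).injective (by simpa using this)

lemma pderiv_last_rename {n : ℕ} (q : MvPolynomial (Fin n) ℝ) :
    pderiv (Fin.last n) (rename Fin.castSucc q) = 0 := by
  apply pderiv_eq_zero_of_notMem_vars
  intro h
  obtain ⟨i, _, hi⟩ := mem_vars_rename _ _ h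
  exact (Fin.castSucc_lt_last i).ne hi

lemma my_pderiv_comm {σ : Type*} {R : Type*} [CommSemiring R] (i k : σ)
    (q : MvPolynomial σ R) :
    pderiv i (pderiv k q) = pderiv k (pderiv i q) := by
  classical
  induction q using MvPolynomial.induction_on' with
  | add p q hp hq => simp [hp, hq]
  | monomial s a =>
    rcases eq_or_ne i k with rfl | hik
    · rfl
    · simp only [pderiv_monomial]
      have h1 : (s - Finsupp.single k 1 : σ →₀ ℕ) i = s i := by
        simp [Finsupp.sub_apply, Finsupp.single_apply, Ne.symm hik]
      have h2 : (s - Finsupp.single i 1 : σ →₀ ℕ) k = s k := by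
        simp [Finsupp.sub_apply, Finsupp.single_apply, hik]
      rw [h1, h2, tsub_right_comm]
      ring_nf

lemma cc_pderiv_last {n : ℕ} (l : ℕ) (P : MvPolynomial (Fin (n+1)) ℝ) :
    cc n l (pderiv (Fin.last n) P) = (l+1 : ℕ) • cc n (l+1) P := by
  induction P using my_induction with
  | hadd P Q hP hQ => simp only [map_add, smul_add, hP, hQ]
  | hmono q k =>
    rw [pderiv_mul, pderiv_last_rename, zero_mul, zero_add, pderiv_pow, pderiv_X_self, mul_one]
    rw [show rename Fin.castSucc q * ((k : MvPolynomial (Fin (n+1)) ℝ) * X (Fin.last n) ^ (k-1))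
        = k • (rename Fin.castSucc q * X (Fin.last n) ^ (k-1)) by
      rw [nsmul_eq_mul]; ring]
    rw [map_nsmul, cc_basic, cc_basic]
    match k with
    | 0 => simp
    | (k'+1) =>
      simp only [Nat.add_sub_cancel]
      rcases eq_or_ne l k' with rfl | h
      · simp
      · rw [if_neg h, if_neg (by omega), smul_zero, smul_zero]

lemma cc_pderiv_castSucc {n : ℕ} (i : Fin n) (l : ℕ) (P : MvPolynomial (Fin (n+1)) ℝ) :
    cc n l (pderiv i.castSucc P) = pderiv i (cc n l P) := by
  induction P using my_induction with
  | hadd P Q hP hQ => simp only [map_add, hP, hQ]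
  | hmono q k =>
    rw [pderiv_mul, pderiv_rename (Fin.castSucc_injective n),
      show pderiv i.castSucc (X (Fin.last n) ^ k : MvPolynomial (Fin (n+1)) ℝ) = 0 by
        rw [pderiv_pow, pderiv_X_of_ne (Fin.castSucc_lt_last i).ne', mul_zero],
      mul_zero, add_zero, cc_basic, cc_basic]
    split <;> simp

lemma my_coeff_pderiv {σ : Type*} {R : Type*} [CommSemiring R] (i : σ)
    (f : MvPolynomial σ R) (d : σ →₀ ℕ) :
    coeff d (pderiv i f) = (d i + 1 : ℕ) * coeff (d + Finsupp.single i 1) f := by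
  classical
  induction f using MvPolynomial.induction_on' with
  | add p q hp hq => simp [hp, hq, mul_add]
  | monomial s a =>
    rw [pderiv_monomial, coeff_monomial, coeff_monomial]
    rcases eq_or_ne s (d + Finsupp.single i 1) with rfl | hne
    · rw [if_pos (add_tsub_cancel_right _ _), if_pos rfl]
      have hsi : ((d + Finsupp.single i 1 : σ →₀ ℕ) i : ℕ) = d i + 1 := by
        simp [Finsupp.add_apply, Finsupp.single_apply]
      rw [hsi, mul_comm]
    · rw [if_neg hne, mul_zero]
      rcases eq_or_ne (s i) 0 with h0 | h0
      · split
        · next h =>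
            have : (s i : R) = 0 := by rw [h0]; simp
            rw [this, mul_zero]
        · rfl
      · rw [if_neg]
        intro hd
        apply hne
        have hle : Finsupp.single i 1 ≤ s := by
          rw [Finsupp.single_le_iff]; omega
        rw [← hd, tsub_add_cancel_of_le hle]

lemma my_pderiv_isHomogeneous {σ : Type*} {R : Type*} [CommSemiring R]
    {f : MvPolynomial σ R} {m : ℕ} (i : σ)
    (h : f.IsHomogeneous (m+1)) : (pderiv i f).IsHomogeneous m := by
  intro d hd
  rw [my_coeff_pderiv] at hd
  have hne : coeff (d + Finsupp.single i 1) f ≠ 0 := by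
    intro h0; rw [h0, mul_zero] at hd; exact hd rfl
  have := h hne
  rw [map_add] at this
  have hsingle : (Finsupp.weight 1) (Finsupp.single i 1) = 1 := by
    rw [Finsupp.weight_apply, Finsupp.sum_single_index] <;> simp
  rw [hsingle] at this
  omega

lemma my_pderiv_homog_zero {σ : Type*} {R : Type*} [CommSemiring R]
    {f : MvPolynomial σ R} (i : σ) (h : f.IsHomogeneous 0) : pderiv i f = 0 := by
  ext d
  rw [my_coeff_pderiv, coeff_zero]
  have : coeff (d + Finsupp.single i 1) f = 0 := by
    by_contra hne
    have := h hne
    rw [map_add] at this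
    have hsingle : (Finsupp.weight 1) (Finsupp.single i 1) = 1 := by
      rw [Finsupp.weight_apply, Finsupp.sum_single_index] <;> simp
    omega
  rw [this, mul_zero]

/-- The horizontal Laplacian acting on polynomials in the horizontal variables only. -/
def lapN (n : ℕ) : Module.End ℝ (MvPolynomial (Fin n) ℝ) :=
  ∑ i : Fin n, ((pderiv (R := ℝ) i).toLinearMap ∘ₗ (pderiv (R := ℝ) i).toLinearMap)

lemma lapN_apply {n : ℕ} (q : MvPolynomial (Fin n) ℝ) :
    lapN n q = ∑ i : Fin n, pderiv i (pderiv i q) := by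
  simp [lapN]

lemma lapN_isHomogeneous {n m : ℕ} {q : MvPolynomial (Fin n) ℝ}
    (h : q.IsHomogeneous (m+2)) : (lapN n q).IsHomogeneous m := by
  rw [lapN_apply]
  exact IsHomogeneous.sum _ _ _ fun i _ =>
    my_pderiv_isHomogeneous i (my_pderiv_isHomogeneous i h)

lemma lapN_zero_of_low {n k : ℕ} {q : MvPolynomial (Fin n) ℝ}
    (h : q.IsHomogeneous k) (hk : k ≤ 1) : lapN n q = 0 := by
  rw [lapN_apply]
  apply Finset.sum_eq_zero
  intro i _
  interval_cases k
  · rw [my_pderiv_homog_zero i h, map_zero]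
  · rw [my_pderiv_homog_zero i (my_pderiv_isHomogeneous i h)]

lemma lapN_pow_zero {n k j : ℕ} {q : MvPolynomial (Fin n) ℝ}
    (h : q.IsHomogeneous k) (hj : k < 2*j) : ((lapN n) ^ j) q = 0 := by
  induction j generalizing q k with
  | zero => omega
  | succ j ih =>
    rw [pow_succ, Module.End.mul_apply]
    rcases le_or_gt k 1 with hk | hk
    · rw [lapN_zero_of_low h hk, map_zero]
    · obtain ⟨k', rfl⟩ : ∃ k', k = k' + 2 := ⟨k - 2, by omega⟩
      exact ih (lapN_isHomogeneous h) (by omega)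

lemma cc_lapX {n : ℕ} (l : ℕ) (P : MvPolynomial (Fin (n+1)) ℝ) :
    cc n l (lapX n P) = lapN n (cc n l P) := by
  rw [lapX, lapN]
  simp only [LinearMap.sum_apply, LinearMap.comp_apply, Derivation.coeFn_coe, map_sum]
  exact Finset.sum_congr rfl fun i _ => by
    rw [cc_pderiv_castSucc, cc_pderiv_castSucc]

lemma cc_lapFull {n : ℕ} (l : ℕ) (P : MvPolynomial (Fin (n+1)) ℝ) :
    cc n l (lapFull n P)
      = lapN n (cc n l P) + ((l+1)*(l+2) : ℕ) • cc n (l+2) P := by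
  rw [lapFull]
  simp only [LinearMap.add_apply, LinearMap.comp_apply, Derivation.coeFn_coe, map_add]
  rw [cc_lapX, cc_pderiv_last, cc_pderiv_last, smul_smul]

lemma cc_isHomogeneous {n m l : ℕ} {P : MvPolynomial (Fin (n+1)) ℝ}
    (h : P.IsHomogeneous m) (hlm : l ≤ m) : (cc n l P).IsHomogeneous (m - l) := by
  have h2 : (rename (finRotate (n+1)) P).IsHomogeneous m := h.rename_isHomogeneous
  have h3 := h2.finSuccEquiv_coeff_isHomogeneous l (m - l) (by omega)
  simpa [cc_apply, eE] using h3

lemma cc_eq_zero_of_gt {n m l : ℕ} {P : MvPolynomial (Fin (n+1)) ℝ}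
    (h : P.IsHomogeneous m) (hl : m < l) : cc n l P = 0 := by
  rw [cc_apply]
  have h2 : (rename (finRotate (n+1)) P).IsHomogeneous m := h.rename_isHomogeneous
  have hdeg : (MvPolynomial.finSuccEquiv ℝ n (rename (finRotate (n+1)) P)).natDegree < l := by
    rw [natDegree_finSuccEquiv]
    calc degreeOf 0 (rename (finRotate (n+1)) P)
        ≤ (rename (finRotate (n+1)) P).totalDegree := degreeOf_le_totalDegree _ _
      _ ≤ m := h2.totalDegree_le
      _ < l := hl
  have : eE n P = MvPolynomial.finSuccEquiv ℝ n (rename (finRotate (n+1)) P) := rfl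
  rw [this]
  exact Polynomial.coeff_eq_zero_of_natDegree_lt hdeg

lemma eval_snoc_eq {n : ℕ} (x : Fin n → ℝ) (P : MvPolynomial (Fin (n+1)) ℝ) :
    eval (Fin.snoc x 0) P = eval x (cc n 0 P) := by
  induction P using my_induction with
  | hadd P Q hP hQ => simp only [map_add, hP, hQ]
  | hmono q k =>
    rw [map_mul, map_pow, eval_X, Fin.snoc_last, eval_rename, cc_basic]
    have hcomp : (Fin.snoc x 0 : Fin (n+1) → ℝ) ∘ Fin.castSucc = x := by
      funext i; simp
    rw [hcomp]
    match k with
    | 0 => simp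
    | (k'+1) => simp [pow_succ]

lemma lapX_rename {n : ℕ} (q : MvPolynomial (Fin n) ℝ) :
    lapX n (rename Fin.castSucc q) = rename Fin.castSucc (lapN n q) := by
  rw [lapX, lapN]
  simp only [LinearMap.sum_apply, LinearMap.comp_apply, Derivation.coeFn_coe, map_sum]
  exact Finset.sum_congr rfl fun i _ => by
    rw [pderiv_rename (Fin.castSucc_injective n), pderiv_rename (Fin.castSucc_injective n)]

lemma lapX_pow_rename {n : ℕ} (j : ℕ) (q : MvPolynomial (Fin n) ℝ) :
    ((lapX n) ^ j) (rename Fin.castSucc q) = rename Fin.castSucc (((lapN n) ^ j) q) := by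
  induction j generalizing q with
  | zero => simp
  | succ j ih => rw [pow_succ, Module.End.mul_apply, pow_succ, Module.End.mul_apply,
      lapX_rename, ih]

lemma pderiv_lapN {n : ℕ} (i : Fin n) (q : MvPolynomial (Fin n) ℝ) :
    pderiv i (lapN n q) = lapN n (pderiv i q) := by
  rw [lapN_apply, lapN_apply, map_sum]
  exact Finset.sum_congr rfl fun k _ => by
    rw [my_pderiv_comm i k, my_pderiv_comm i k]

lemma pderiv_lapN_pow {n : ℕ} (i : Fin n) (j : ℕ) (q : MvPolynomial (Fin n) ℝ) :
    pderiv i (((lapN n) ^ j) q) = ((lapN n) ^ j) (pderiv i q) := by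
  induction j generalizing q with
  | zero => simp
  | succ j ih => rw [pow_succ, Module.End.mul_apply, Module.End.mul_apply, ih, pderiv_lapN]

lemma cc_rec {n : ℕ} {P : MvPolynomial (Fin (n+1)) ℝ} (hP : lapFull n P = 0) (l : ℕ) :
    cc n (l+2) P = (-((((l+1)*(l+2) : ℕ) : ℝ))⁻¹) • lapN n (cc n l P) := by
  have h0 : cc n l (lapFull n P) = 0 := by rw [hP, map_zero]
  rw [cc_lapFull, ← Nat.cast_smul_eq_nsmul ℝ] at h0
  have hN : ((((l+1)*(l+2) : ℕ)) : ℝ) ≠ 0 := Nat.cast_ne_zero.mpr (by positivity)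
  have h1 : ((((l+1)*(l+2) : ℕ)) : ℝ) • cc n (l+2) P = - lapN n (cc n l P) :=
    eq_neg_of_add_eq_zero_right (by linear_combination (norm := module) h0)
  have h2 := congrArg (fun v => ((((l+1)*(l+2) : ℕ)) : ℝ)⁻¹ • v) h1
  simp only [inv_smul_smul₀ hN] at h2
  rw [h2, smul_neg, neg_smul]

lemma cc_even_zero {n : ℕ} {P : MvPolynomial (Fin (n+1)) ℝ}
    (hP : lapFull n P = 0) (h0 : cc n 0 P = 0) : ∀ j, cc n (2*j) P = 0 := by
  intro j
  induction j with
  | zero => simpa using h0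
  | succ j ih =>
    have hidx : 2*(j+1) = (2*j)+2 := by ring
    rw [hidx, cc_rec hP, ih, map_zero, smul_zero]

lemma cc_odd {n : ℕ} {P : MvPolynomial (Fin (n+1)) ℝ} (hP : lapFull n P = 0) :
    ∀ j, cc n (2*j+1) P
      = ((-1:ℝ)^j / (((2*j+1).factorial : ℕ) : ℝ)) • (((lapN n) ^ j) (cc n 1 P)) := by
  intro j
  induction j with
  | zero => simp
  | succ j ih =>
    have hidx : 2*(j+1)+1 = (2*j+1)+2 := by ring
    rw [hidx, cc_rec hP, ih, map_smul, smul_smul]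
    rw [show lapN n (((lapN n)^j) (cc n 1 P)) = ((lapN n)^(j+1)) (cc n 1 P) by
      rw [pow_succ', Module.End.mul_apply]]
    congr 1
    have hfact : ((2*(j+1)+1).factorial : ℕ)
        = (2*j+3)*((2*j+2)*((2*j+1).factorial)) := by
      have h1 : (2*(j+1)+1) = (2*j+1) + 1 + 1 := by ring
      rw [h1, Nat.factorial_succ, Nat.factorial_succ]
      try ring
    have hf0 : (((2*j+1).factorial : ℕ) : ℝ) ≠ 0 :=
      Nat.cast_ne_zero.mpr (Nat.factorial_ne_zero _)
    rw [show 2*j+1+2 = 2*(j+1)+1 by ring, hfact]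
    push_cast
    have h23 : ((2*j+3 : ℕ) : ℝ) ≠ 0 := by positivity
    field_simp
    ring

lemma cc_T {n m : ℕ} (a : MvPolynomial (Fin n) ℝ) (l : ℕ) :
    cc n l (∑ j ∈ Finset.range (m+1),
        ((-1:ℝ)^j / ((2*j+1).factorial : ℝ)) •
          (((lapX n)^j) (rename Fin.castSucc a) * X (Fin.last n) ^ (2*j+1)))
    = ∑ j ∈ Finset.range (m+1),
        (if l = 2*j+1
          then ((-1:ℝ)^j / ((2*j+1).factorial : ℝ)) • (((lapN n)^j) a) else 0) := by
  rw [map_sum]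
  refine Finset.sum_congr rfl fun j _ => ?_
  rw [map_smul, lapX_pow_rename, cc_basic]
  split <;> simp

lemma cc_T_even {n m : ℕ} (a : MvPolynomial (Fin n) ℝ) (j : ℕ) :
    cc n (2*j) (∑ j ∈ Finset.range (m+1),
        ((-1:ℝ)^j / ((2*j+1).factorial : ℝ)) •
          (((lapX n)^j) (rename Fin.castSucc a) * X (Fin.last n) ^ (2*j+1))) = 0 := by
  rw [cc_T]
  exact Finset.sum_eq_zero fun j' _ => if_neg (by omega)

lemma cc_T_odd {n m : ℕ} (a : MvPolynomial (Fin n) ℝ) (j : ℕ) :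
    cc n (2*j+1) (∑ j ∈ Finset.range (m+1),
        ((-1:ℝ)^j / ((2*j+1).factorial : ℝ)) •
          (((lapX n)^j) (rename Fin.castSucc a) * X (Fin.last n) ^ (2*j+1)))
    = if j ≤ m then ((-1:ℝ)^j / ((2*j+1).factorial : ℝ)) • (((lapN n)^j) a) else 0 := by
  rw [cc_T]
  have hcong : ∀ j' ∈ Finset.range (m+1),
      (if 2*j+1 = 2*j'+1
        then ((-1:ℝ)^j' / ((2*j'+1).factorial : ℝ)) • (((lapN n)^j') a) else 0)
      = (if j' = j
        then ((-1:ℝ)^j' / ((2*j'+1).factorial : ℝ)) • (((lapN n)^j') a) else 0) := by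
    intro j' _
    exact if_congr (by omega) rfl rfl
  rw [Finset.sum_congr rfl hcong, Finset.sum_ite_eq']
  simp only [Finset.mem_range]
  exact if_congr (by omega) rfl rfl

/-- for `d ≥ 2`, `m ≥ 2` and `w ∈ 𝒫̇_m(ℝ^d)^d`, one has `(w,0) ∈ Ṡ_m(ℝ^d_+)`
iff `w_d = 0` and there are `a^{(1)},…,a^{(d-1)} ∈ 𝒫̇_{m-1}(ℝ^{d-1})` with
`∂_1 a^{(1)} + ⋯ + ∂_{d-1} a^{(d-1)} = 0` such that
`w_i(x,y) = Σ_{j≥0} ((-1)^j/(2j+1)!) ((Δ')^j a^{(i)})(x) y^{2j+1}` for `i = 1,…,d-1`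
(finite sums: terms with `j > m` vanish, so we truncate at `m`). -/
theorem stmt8 (n m : ℕ) (hn : 1 ≤ n) (hm : 2 ≤ m)
    (w : Fin (n + 1) → MvPolynomial (Fin (n + 1)) ℝ)
    (hw : ∀ k, (w k).IsHomogeneous m) :
    IsDotStokes n m w 0 ↔
      (w (Fin.last n) = 0 ∧
        ∃ a : Fin n → MvPolynomial (Fin n) ℝ,
          (∀ i, (a i).IsHomogeneous (m - 1)) ∧
          (∑ i : Fin n, pderiv (R := ℝ) i (a i)) = 0 ∧
          ∀ i : Fin n, w i.castSucc
            = ∑ j ∈ Finset.range (m + 1),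
                ((-1 : ℝ) ^ j / ((2 * j + 1).factorial : ℝ)) •
                  (((lapX n) ^ j) (rename Fin.castSucc (a i)) *
                    (X (Fin.last n)) ^ (2 * j + 1))) := by
  constructor
  · rintro ⟨hhom, -, heq, hdiv, hbv⟩
    have hlap : ∀ k, lapFull n (w k) = 0 := by
      intro k
      have h := heq k
      rw [map_zero, add_zero, neg_eq_zero] at h
      exact h
    have hcc0 : ∀ k, cc n 0 (w k) = 0 := by
      intro k
      apply MvPolynomial.funext
      intro x
      rw [← eval_snoc_eq, hbv x k, map_zero]
    have hdivcc : ∀ l, (∑ i : Fin n, pderiv (R := ℝ) i (cc n l (w i.castSucc)))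
        + (l+1:ℕ) • cc n (l+1) (w (Fin.last n)) = 0 := by
      intro l
      have h := congrArg (cc n l) hdiv
      rw [map_zero, map_sum, Fin.sum_univ_castSucc, cc_pderiv_last] at h
      simp_rw [cc_pderiv_castSucc] at h
      exact h
    have hb1 : cc n 1 (w (Fin.last n)) = 0 := by
      have h := hdivcc 0
      simp only [hcc0, map_zero, Finset.sum_const_zero, zero_add] at h
      simpa using h
    have hwlast : w (Fin.last n) = 0 := by
      apply cc_ext
      intro l
      rcases Nat.even_or_odd l with ⟨j, hj⟩ | ⟨j, hj⟩
      · have hl : l = 2*j := by omega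
        rw [hl]
        exact cc_even_zero (hlap _) (hcc0 _) j
      · rw [hj, cc_odd (hlap _) j, hb1, map_zero, smul_zero]
    refine ⟨hwlast, fun i => cc n 1 (w i.castSucc), ?_, ?_, ?_⟩
    · intro i
      exact cc_isHomogeneous (hw i.castSucc) (by omega)
    · have h := hdivcc 1
      rw [hwlast, map_zero, smul_zero, add_zero] at h
      exact h
    · intro i
      apply sub_eq_zero.mp
      apply cc_ext
      intro l
      rw [map_sub, sub_eq_zero]
      rcases Nat.even_or_odd l with ⟨j, hj⟩ | ⟨j, hj⟩
      · have hl : l = 2*j := by omega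
        rw [hl]
        exact (cc_even_zero (hlap _) (hcc0 _) j).trans (cc_T_even _ j).symm
      · rw [hj, cc_T_odd]
        rcases le_or_gt j m with hjm | hjm
        · rw [if_pos hjm, cc_odd (hlap _) j]
        · rw [if_neg (not_le.mpr hjm)]
          exact cc_eq_zero_of_gt (hw _) (by omega)
  · rintro ⟨hwlast, a, hahom, hadiv, haeq⟩
    have hlapNa : ∀ (i : Fin n) (j : ℕ), m ≤ 2*j → ((lapN n)^j) (a i) = 0 := by
      intro i j hj
      exact lapN_pow_zero (hahom i) (by omega)
    have hlapT : ∀ i : Fin n, lapFull n (w i.castSucc) = 0 := by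
      intro i
      rw [haeq i]
      apply cc_ext
      intro l
      rw [cc_lapFull]
      rcases Nat.even_or_odd l with ⟨j, hj⟩ | ⟨j, hj⟩
      · have hl : l = 2*j := by omega
        rw [hl, show 2*j+2 = 2*(j+1) by ring, cc_T_even, cc_T_even, map_zero,
          smul_zero, add_zero]
      · rw [hj, show (2*j+1)+2 = 2*(j+1)+1 by ring, cc_T_odd, cc_T_odd]
        rcases le_or_gt (j+1) m with hjm | hjm
        · rw [if_pos (by omega), if_pos hjm, map_smul,
            show lapN n (((lapN n)^j) (a i)) = ((lapN n)^(j+1)) (a i) by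
              rw [pow_succ', Module.End.mul_apply],
            ← Nat.cast_smul_eq_nsmul ℝ, smul_smul, ← add_smul]
          convert zero_smul ℝ (((lapN n)^(j+1)) (a i)) using 2
          have hfact : ((2*(j+1)+1).factorial : ℕ)
              = (2*j+3)*((2*j+2)*((2*j+1).factorial)) := by
            have h1 : (2*(j+1)+1) = (2*j+1) + 1 + 1 := by ring
            rw [h1, Nat.factorial_succ, Nat.factorial_succ]
            try ring
          have hf0 : (((2*j+1).factorial : ℕ) : ℝ) ≠ 0 :=
            Nat.cast_ne_zero.mpr (Nat.factorial_ne_zero _)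
          rw [hfact]
          push_cast
          have h23 : ((2*j+3 : ℕ) : ℝ) ≠ 0 := by positivity
          field_simp
          ring
        · rcases le_or_gt j m with hjm2 | hjm2
          · rw [if_pos hjm2, if_neg (by omega), smul_zero, add_zero, map_smul,
              show lapN n (((lapN n)^j) (a i)) = ((lapN n)^(j+1)) (a i) by
                rw [pow_succ', Module.End.mul_apply],
              hlapNa i (j+1) (by omega), smul_zero]
          · rw [if_neg (by omega), if_neg (by omega)]
            simp
    refine ⟨hw, isHomogeneous_zero _ _ _, ?_, ?_, ?_⟩
    · intro k
      rw [map_zero, add_zero, neg_eq_zero]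
      induction k using Fin.lastCases with
      | last => rw [hwlast, map_zero]
      | cast i => exact hlapT i
    · rw [Fin.sum_univ_castSucc, hwlast, map_zero, add_zero]
      apply cc_ext
      intro l
      rw [map_sum]
      have hterm : ∀ i : Fin n,
          cc n l (pderiv (R := ℝ) i.castSucc (w i.castSucc))
            = pderiv (R := ℝ) i (cc n l (w i.castSucc)) :=
        fun i => cc_pderiv_castSucc i l _
      rw [Finset.sum_congr rfl fun i _ => hterm i]
      rcases Nat.even_or_odd l with ⟨j, hj⟩ | ⟨j, hj⟩
      · have hl : l = 2*j := by omega
        refine Finset.sum_eq_zero fun i _ => ?_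
        rw [haeq i, hl, cc_T_even, map_zero]
      · rcases le_or_gt j m with hjm | hjm
        · have hterm2 : ∀ i : Fin n,
              pderiv (R := ℝ) i (cc n l (w i.castSucc))
                = ((-1:ℝ)^j / ((2*j+1).factorial : ℝ)) •
                    (((lapN n)^j) (pderiv (R := ℝ) i (a i))) := by
            intro i
            rw [haeq i, hj, cc_T_odd, if_pos hjm, Derivation.map_smul, pderiv_lapN_pow]
          rw [Finset.sum_congr rfl fun i _ => hterm2 i, ← Finset.smul_sum, ← map_sum,
            hadiv, map_zero, smul_zero]
        · refine Finset.sum_eq_zero fun i _ => ?_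
          rw [haeq i, hj, cc_T_odd, if_neg (not_le.mpr hjm), map_zero]
    · intro x k
      rw [eval_snoc_eq]
      induction k using Fin.lastCases with
      | last => rw [hwlast, map_zero, map_zero]
      | cast i =>
        rw [haeq i]
        have h0 := cc_T_even (m := m) (a i) 0
        rw [Nat.mul_zero] at h0
        rw [h0, map_zero]
end
end

section
/- Let O ⊆ ℝ^d be open, α ∈ ℤ_{≥0}^{d-1}, and for each multi-index β ≤ α let V^β : O → ℝ^d be of class C². Define v^α(x,y) = Σ_{β≤α} binom(α,β) x^{α−β} V^β(x,y). Then on O: Δv^α = Σ_{β≤α} binom(α,β) x^{α−β} ( ΔV^β + Σ_{i=1}^{d-1} ( 2 binom(β_i,2) V^{β−2ε_i} + 2 β_i ∂_i V^{β−ε_i} ) ). -/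
noncomputable section

/-- Partial derivative `∂_i f` of a scalar function on `ℝ^d = ℝ^{n+1}`
(the last coordinate is `y`). -/
def pd (n : ℕ) (i : Fin (n + 1)) (f : (Fin (n + 1) → ℝ) → ℝ) : (Fin (n + 1) → ℝ) → ℝ :=
  fun z => fderiv ℝ f z (Pi.single i 1)

/-- Laplacian `Δ = ∂_1² + ⋯ + ∂_{d-1}² + ∂_y²`. -/
def lapF (n : ℕ) (f : (Fin (n + 1) → ℝ) → ℝ) : (Fin (n + 1) → ℝ) → ℝ :=
  fun z => ∑ i : Fin (n + 1), pd n i (pd n i f) z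

/-- Generalized binomial coefficient `binom(α,β) = ∏ᵢ binom(αᵢ,βᵢ)`. -/
def mchoose {n : ℕ} (α β : Fin n → ℕ) : ℕ := ∏ i, (α i).choose (β i)

/-- The monomial `x^{α-β} = ∏ᵢ xᵢ^{αᵢ-βᵢ}` (in the horizontal variables). -/
def xmono {n : ℕ} (α β : Fin n → ℕ) (z : Fin (n + 1) → ℝ) : ℝ :=
  ∏ i : Fin n, z i.castSucc ^ (α i - β i)

/-- Coercion of a multi-index to an integer multi-index. -/
def mcast {n : ℕ} (β : Fin n → ℕ) : Fin n → ℤ := fun i => (β i : ℤ)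

variable {n : ℕ}

/-! ### Auxiliary lemmas: monomial calculus -/

lemma xmono_succ (α β : Fin n → ℕ) (i : Fin n) (w : Fin (n + 1) → ℝ) :
    xmono α (β + Pi.single i 1) w
      = w i.castSucc ^ (α i - β i - 1) * ∏ j ∈ Finset.univ.erase i, w j.castSucc ^ (α j - β j) := by
  unfold xmono
  rw [← Finset.mul_prod_erase Finset.univ _ (Finset.mem_univ i)]
  congr 1
  · congr 1
    simp [Pi.single_apply]
    omega
  · refine Finset.prod_congr rfl fun j hj => ?_
    have hji : j ≠ i := (Finset.mem_erase.1 hj).1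
    simp [Pi.single_apply, hji]

lemma xmono_hasFDerivAt (α β : Fin n → ℕ) (w : Fin (n + 1) → ℝ) :
    HasFDerivAt (xmono α β)
      (∑ i : Fin n, (((α i - β i : ℕ) : ℝ) * xmono α (β + Pi.single i 1) w) •
        (ContinuousLinearMap.proj i.castSucc : ((Fin (n + 1)) → ℝ) →L[ℝ] ℝ)) w := by
  have hg : ∀ i ∈ Finset.univ, HasFDerivAt (fun w : Fin (n + 1) → ℝ => w i.castSucc ^ (α i - β i))
      ((((α i - β i : ℕ) : ℝ) * w i.castSucc ^ (α i - β i - 1)) •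
        (ContinuousLinearMap.proj i.castSucc : ((Fin (n + 1)) → ℝ) →L[ℝ] ℝ)) w := by
    intro i _
    exact (hasDerivAt_pow (α i - β i) (w i.castSucc)).comp_hasFDerivAt w
      (hasFDerivAt_apply i.castSucc w)
  have h := HasFDerivAt.finset_prod hg
  refine h.congr_fderiv ?_
  refine Finset.sum_congr rfl fun i _ => ?_
  rw [smul_smul, xmono_succ]
  congr 1
  ring

lemma xmono_differentiableAt (α β : Fin n → ℕ) (w : Fin (n + 1) → ℝ) :
    DifferentiableAt ℝ (xmono α β) w := (xmono_hasFDerivAt α β w).differentiableAt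

lemma contDiff_xmono (α β : Fin n → ℕ) : ContDiff ℝ 2 (xmono α β) := by
  unfold xmono
  exact contDiff_prod (fun i _ =>
    ((ContinuousLinearMap.proj i.castSucc : ((Fin (n + 1)) → ℝ) →L[ℝ] ℝ).contDiff).pow _)

lemma pd_xmono (α β : Fin n → ℕ) (j : Fin n) (w : Fin (n + 1) → ℝ) :
    pd n j.castSucc (xmono α β) w
      = ((α j - β j : ℕ) : ℝ) * xmono α (β + Pi.single j 1) w := by
  unfold pd
  rw [(xmono_hasFDerivAt α β w).fderiv]
  simp only [ContinuousLinearMap.coe_sum', Finset.sum_apply, ContinuousLinearMap.coe_smul',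
    Pi.smul_apply, ContinuousLinearMap.proj_apply, smul_eq_mul, Pi.single_apply,
    Fin.castSucc_inj]
  rw [Finset.sum_congr rfl (fun i _ => by rw [mul_ite, mul_one, mul_zero])]
  simp

lemma pd_xmono_last (α β : Fin n → ℕ) (w : Fin (n + 1) → ℝ) :
    pd n (Fin.last n) (xmono α β) w = 0 := by
  unfold pd
  rw [(xmono_hasFDerivAt α β w).fderiv]
  simp only [ContinuousLinearMap.coe_sum', Finset.sum_apply, ContinuousLinearMap.coe_smul',
    Pi.smul_apply, ContinuousLinearMap.proj_apply, smul_eq_mul, Pi.single_apply]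
  have : ∀ i : Fin n, (i.castSucc : Fin (n+1)) ≠ Fin.last n := fun i => (Fin.castSucc_lt_last i).ne
  rw [Finset.sum_congr rfl (fun i _ => by rw [if_neg (this i), mul_zero])]
  simp

/-! ### Auxiliary lemmas: pointwise calculus on open sets -/

lemma pd_sum {ι : Type*} {s : Finset ι} {f : ι → (Fin (n+1) → ℝ) → ℝ} {w} (i : Fin (n+1))
    (h : ∀ b ∈ s, DifferentiableAt ℝ (f b) w) :
    pd n i (fun x => ∑ b ∈ s, f b x) w = ∑ b ∈ s, pd n i (f b) w := by
  unfold pd; rw [fderiv_fun_sum h]; simp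

lemma pd_mul {f g : (Fin (n+1) → ℝ) → ℝ} {w} (i : Fin (n+1))
    (hf : DifferentiableAt ℝ f w) (hg : DifferentiableAt ℝ g w) :
    pd n i (fun x => f x * g x) w = f w * pd n i g w + pd n i f w * g w := by
  unfold pd; rw [fderiv_fun_mul hf hg]; simp [smul_eq_mul]; ring

lemma pd_add {f g : (Fin (n+1) → ℝ) → ℝ} {w} (i : Fin (n+1))
    (hf : DifferentiableAt ℝ f w) (hg : DifferentiableAt ℝ g w) :
    pd n i (fun x => f x + g x) w = pd n i f w + pd n i g w := by
  unfold pd; rw [fderiv_fun_add hf hg]; simp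

lemma pd_congr_nhds {f g : (Fin (n+1) → ℝ) → ℝ} {w} (i : Fin (n+1)) (h : f =ᶠ[nhds w] g) :
    pd n i f w = pd n i g w := by
  unfold pd; rw [h.fderiv_eq]

lemma pd_diffAt {O : Set ((Fin (n+1)) → ℝ)} (hO : IsOpen O) {f} (hf : ContDiffOn ℝ 2 f O)
    {w} (hw : w ∈ O) (i : Fin (n+1)) : DifferentiableAt ℝ (pd n i f) w := by
  have h1 : ContDiffOn ℝ 1 (fderiv ℝ f) O := hf.fderiv_of_isOpen hO (by norm_num)
  have h2 : ContDiffOn ℝ 1 (pd n i f) O := h1.clm_apply contDiffOn_const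
  exact (h2.differentiableOn (by norm_num)).differentiableAt (hO.mem_nhds hw)

lemma diffAt_of_contDiffOn {O : Set ((Fin (n+1)) → ℝ)} (hO : IsOpen O) {f : (Fin (n+1) → ℝ) → ℝ}
    (hf : ContDiffOn ℝ 2 f O) {w} (hw : w ∈ O) : DifferentiableAt ℝ f w :=
  ((hf.differentiableOn (by norm_num)).differentiableAt (hO.mem_nhds hw))

lemma lap_sum {O : Set ((Fin (n+1)) → ℝ)} (hO : IsOpen O) {ι : Type*} {s : Finset ι}
    {f : ι → (Fin (n+1) → ℝ) → ℝ} (hf : ∀ b ∈ s, ContDiffOn ℝ 2 (f b) O) {z} (hz : z ∈ O) :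
    lapF n (fun w => ∑ b ∈ s, f b w) z = ∑ b ∈ s, lapF n (f b) z := by
  have h1 : ∀ i : Fin (n+1), ∀ w ∈ O,
      pd n i (fun x => ∑ b ∈ s, f b x) w = ∑ b ∈ s, pd n i (f b) w := by
    intro i w hw
    exact pd_sum i (fun b hb => diffAt_of_contDiffOn hO (hf b hb) hw)
  have h2 : ∀ i : Fin (n+1),
      pd n i (pd n i (fun x => ∑ b ∈ s, f b x)) z = ∑ b ∈ s, pd n i (pd n i (f b)) z := by
    intro i
    have he : pd n i (fun x => ∑ b ∈ s, f b x) =ᶠ[nhds z] (fun w => ∑ b ∈ s, pd n i (f b) w) :=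
      Filter.eventuallyEq_of_mem (hO.mem_nhds hz) (fun w hw => h1 i w hw)
    rw [pd_congr_nhds i he, pd_sum i (fun b hb => pd_diffAt hO (hf b hb) hz i)]
  unfold lapF
  rw [Finset.sum_congr rfl (fun i _ => h2 i), Finset.sum_comm]

lemma lap_mul {O : Set ((Fin (n+1)) → ℝ)} (hO : IsOpen O) {m g : (Fin (n+1) → ℝ) → ℝ}
    (hm : ContDiff ℝ 2 m) (hg : ContDiffOn ℝ 2 g O) {z} (hz : z ∈ O) :
    lapF n (fun w => m w * g w) z
      = m z * lapF n g z + 2 * ∑ i : Fin (n+1), pd n i m z * pd n i g z + lapF n m z * g z := by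
  have hmd : Differentiable ℝ m := hm.differentiable (by norm_num)
  have hmO : ContDiffOn ℝ 2 m (Set.univ) := hm.contDiffOn
  have h1 : ∀ i : Fin (n+1), ∀ w ∈ O,
      pd n i (fun x => m x * g x) w = m w * pd n i g w + pd n i m w * g w := by
    intro i w hw
    exact pd_mul i (hmd w) (diffAt_of_contDiffOn hO hg hw)
  have h2 : ∀ i : Fin (n+1),
      pd n i (pd n i (fun x => m x * g x)) z
        = m z * pd n i (pd n i g) z + 2 * (pd n i m z * pd n i g z)
          + pd n i (pd n i m) z * g z := by
    intro i
    have he : pd n i (fun x => m x * g x) =ᶠ[nhds z]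
        (fun w => m w * pd n i g w + pd n i m w * g w) :=
      Filter.eventuallyEq_of_mem (hO.mem_nhds hz) (fun w hw => h1 i w hw)
    have d1 : DifferentiableAt ℝ (fun w => m w * pd n i g w) z :=
      (hmd z).mul (pd_diffAt hO hg hz i)
    have d2 : DifferentiableAt ℝ (fun w => pd n i m w * g w) z :=
      (pd_diffAt isOpen_univ hmO (Set.mem_univ z) i).mul (diffAt_of_contDiffOn hO hg hz)
    rw [pd_congr_nhds i he, pd_add i d1 d2,
      pd_mul i (hmd z) (pd_diffAt hO hg hz i),
      pd_mul i (pd_diffAt isOpen_univ hmO (Set.mem_univ z) i) (diffAt_of_contDiffOn hO hg hz)]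
    ring
  unfold lapF
  rw [Finset.sum_congr rfl (fun i _ => h2 i)]
  rw [Finset.sum_add_distrib, Finset.sum_add_distrib, ← Finset.mul_sum, ← Finset.mul_sum,
    ← Finset.sum_mul]

/-! ### The monomial factor -/

lemma pd_cxmono (c : ℝ) (α β : Fin n → ℕ) (j : Fin n) :
    pd n j.castSucc (fun w => c * xmono α β w)
      = fun w => (c * ((α j - β j : ℕ) : ℝ)) * xmono α (β + Pi.single j 1) w := by
  funext w
  unfold pd
  rw [fderiv_const_mul (xmono_differentiableAt α β w) c]
  simp only [ContinuousLinearMap.coe_smul', Pi.smul_apply, smul_eq_mul]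
  have h := pd_xmono α β j w
  unfold pd at h
  rw [h]; ring

lemma pd_cxmono_last (c : ℝ) (α β : Fin n → ℕ) :
    pd n (Fin.last n) (fun w => c * xmono α β w) = fun _ => 0 := by
  funext w
  unfold pd
  rw [fderiv_const_mul (xmono_differentiableAt α β w) c]
  simp only [ContinuousLinearMap.coe_smul', Pi.smul_apply, smul_eq_mul]
  have h := pd_xmono_last α β w
  unfold pd at h
  rw [h, mul_zero]

lemma pd_zero_fun {w} (i : Fin (n+1)) : pd n i (fun _ => (0:ℝ)) w = 0 := by
  unfold pd
  simp [fderiv_const]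

lemma lap_cxmono (c : ℝ) (α β : Fin n → ℕ) (z : Fin (n+1) → ℝ) :
    lapF n (fun w => c * xmono α β w) z
      = ∑ j : Fin n, (c * ((α j - β j : ℕ) : ℝ) * ((α j - (β j + 1) : ℕ) : ℝ))
          * xmono α (β + Pi.single j 1 + Pi.single j 1) z := by
  unfold lapF
  rw [Fin.sum_univ_castSucc]
  have hlast : pd n (Fin.last n) (pd n (Fin.last n) (fun w => c * xmono α β w)) z = 0 := by
    rw [pd_cxmono_last]
    exact pd_zero_fun _
  rw [hlast, add_zero]
  refine Finset.sum_congr rfl fun j _ => ?_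
  rw [pd_cxmono c α β j, pd_cxmono (c * ((α j - β j : ℕ) : ℝ)) α (β + Pi.single j 1) j]
  have hbj : (β + Pi.single j 1 : Fin n → ℕ) j = β j + 1 := by simp
  rw [hbj]

lemma cross_sum (c : ℝ) (α β : Fin n → ℕ) (g : (Fin (n+1) → ℝ) → ℝ) (z : Fin (n+1) → ℝ) :
    ∑ i : Fin (n+1), pd n i (fun w => c * xmono α β w) z * pd n i g z
      = ∑ j : Fin n, (c * ((α j - β j : ℕ) : ℝ) * xmono α (β + Pi.single j 1) z)
          * pd n j.castSucc g z := by
  rw [Fin.sum_univ_castSucc]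
  have hlast : pd n (Fin.last n) (fun w => c * xmono α β w) z = 0 :=
    congrFun (pd_cxmono_last c α β) z
  rw [hlast, zero_mul, add_zero]
  refine Finset.sum_congr rfl fun j _ => ?_
  rw [congrFun (pd_cxmono c α β j) z]

/-! ### Combinatorial lemmas -/

lemma mchoose_succ (α β : Fin n → ℕ) (j : Fin n) :
    mchoose α (β + Pi.single j 1) * (β j + 1) = mchoose α β * (α j - β j) := by
  unfold mchoose
  rw [← Finset.mul_prod_erase Finset.univ _ (Finset.mem_univ j),
    ← Finset.mul_prod_erase Finset.univ (fun i => (α i).choose (β i)) (Finset.mem_univ j)]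
  have he : ∀ i ∈ Finset.univ.erase j,
      (α i).choose ((β + Pi.single j 1 : Fin n → ℕ) i) = (α i).choose (β i) := by
    intro i hi
    have h : i ≠ j := (Finset.mem_erase.1 hi).1
    simp [Pi.single_apply, h]
  rw [Finset.prod_congr rfl he]
  have hj : (β + Pi.single j 1 : Fin n → ℕ) j = β j + 1 := by simp
  rw [hj, mul_right_comm, Nat.choose_succ_right_eq, mul_right_comm]

lemma shift (α : Fin n → ℕ) (j : Fin n) (m : ℕ) (F : (Fin n → ℕ) → ℝ)
    (h0 : ∀ β, β ≤ α → β j < m → F β = 0) :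
    ∑ β ∈ Finset.Iic α, F β
      = ∑ β ∈ Finset.Iic α, (if β j + m ≤ α j then F (β + Pi.single j m) else 0) := by
  rw [← Finset.sum_filter]
  rw [← Finset.sum_filter_of_ne (p := fun β => m ≤ β j)
    (fun β hβ hne => by
      by_contra h
      exact hne (h0 β (Finset.mem_Iic.1 hβ) (by omega)))]
  refine Finset.sum_nbij' (fun β => β - Pi.single j m) (fun β => β + Pi.single j m) ?_ ?_ ?_ ?_ ?_
  · intro β hβ
    simp only [Finset.mem_filter, Finset.mem_Iic, Pi.le_def] at hβ ⊢
    obtain ⟨h1, h2⟩ := hβ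
    refine ⟨fun i => ?_, ?_⟩
    · rcases eq_or_ne i j with rfl | h
      · have := h1 i; simp only [Pi.sub_apply, Pi.single_eq_same]; omega
      · have := h1 i; simp only [Pi.sub_apply, Pi.single_apply, if_neg h]; omega
    · have := h1 j; simp only [Pi.sub_apply, Pi.single_eq_same]; omega
  · intro β hβ
    simp only [Finset.mem_filter, Finset.mem_Iic, Pi.le_def] at hβ ⊢
    obtain ⟨h1, h2⟩ := hβ
    refine ⟨fun i => ?_, ?_⟩
    · rcases eq_or_ne i j with rfl | h
      · have := h1 i; simp only [Pi.add_apply, Pi.single_eq_same]; omega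
      · have := h1 i; simp only [Pi.add_apply, Pi.single_apply, if_neg h]; omega
    · simp only [Pi.add_apply, Pi.single_eq_same]; omega
  · intro β hβ
    simp only [Finset.mem_filter, Finset.mem_Iic, Pi.le_def] at hβ
    funext i
    rcases eq_or_ne i j with rfl | h
    · simp only [Pi.add_apply, Pi.sub_apply, Pi.single_eq_same]
      have := hβ.2; omega
    · simp only [Pi.add_apply, Pi.sub_apply, Pi.single_apply, if_neg h]; omega
  · intro β hβ
    funext i
    rcases eq_or_ne i j with rfl | h
    · simp only [Pi.add_apply, Pi.sub_apply, Pi.single_eq_same]; omega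
    · simp only [Pi.add_apply, Pi.sub_apply, Pi.single_apply, if_neg h]; omega
  · intro β hβ
    simp only [Finset.mem_filter, Finset.mem_Iic, Pi.le_def] at hβ
    congr 1
    funext i
    rcases eq_or_ne i j with rfl | h
    · simp only [Pi.add_apply, Pi.sub_apply, Pi.single_eq_same]
      have := hβ.2; omega
    · simp only [Pi.add_apply, Pi.sub_apply, Pi.single_apply, if_neg h]; omega

lemma choose_two (m : ℕ) : 2 * (m + 2).choose 2 = (m + 2) * (m + 1) := by
  rw [Nat.choose_two_right]
  have h : 2 ∣ (m + 2) * (m + 2 - 1) := by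
    rcases Nat.even_or_odd m with h | h
    · obtain ⟨k, rfl⟩ := h
      exact Dvd.dvd.mul_right ⟨k + 1, by omega⟩ _
    · obtain ⟨k, rfl⟩ := h
      exact Dvd.dvd.mul_left ⟨k + 1, by omega⟩ _
  rw [Nat.mul_div_cancel' h]
  congr 1

lemma single_two (j : Fin n) : (Pi.single j 2 : Fin n → ℕ) = Pi.single j 1 + Pi.single j 1 := by
  funext i
  rcases eq_or_ne i j with rfl | h
  · simp
  · simp [Pi.single_apply, h]

lemma mcast_sub1 (β : Fin n → ℕ) (j : Fin n) :
    mcast (β + Pi.single j 1) - Pi.single j 1 = mcast β := by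
  funext i
  rcases eq_or_ne i j with rfl | h
  · simp [mcast]
  · simp [mcast, Pi.single_apply, h]

lemma mcast_sub2 (β : Fin n → ℕ) (j : Fin n) :
    mcast (β + Pi.single j 2) - 2 • Pi.single j 1 = mcast β := by
  funext i
  rcases eq_or_ne i j with rfl | h
  · simp [mcast]
  · simp [mcast, Pi.single_apply, h]

theorem stmt11 (n : ℕ) (hn : 1 ≤ n) (O : Set (Fin (n + 1) → ℝ)) (hO : IsOpen O)
    (α : Fin n → ℕ) (V : (Fin n → ℤ) → (Fin (n + 1) → ℝ) → (Fin (n + 1) → ℝ))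
    (hV0 : ∀ γ : Fin n → ℤ, (∃ i, γ i < 0) → V γ = 0)
    (hV2 : ∀ β : Fin n → ℕ, β ≤ α → ∀ k : Fin (n + 1),
      ContDiffOn ℝ 2 (fun z => V (mcast β) z k) O) :
    ∀ z ∈ O, ∀ k : Fin (n + 1),
      lapF n (fun w => ∑ β ∈ Finset.Iic α, (mchoose α β : ℝ) * xmono α β w * V (mcast β) w k) z
        = ∑ β ∈ Finset.Iic α, (mchoose α β : ℝ) * xmono α β z *
            (lapF n (fun w => V (mcast β) w k) z
              + ∑ i : Fin n,
                  (2 * ((β i).choose 2 : ℝ) * V (mcast β - 2 • Pi.single i 1) z k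
                    + 2 * (β i : ℝ) *
                        pd n i.castSucc (fun w => V (mcast β - Pi.single i 1) w k) z)) := by
  intro z hz k
  classical
  -- expand the Laplacian of the sum termwise
  have hsum : lapF n
        (fun w => ∑ β ∈ Finset.Iic α, (mchoose α β : ℝ) * xmono α β w * V (mcast β) w k) z
      = ∑ β ∈ Finset.Iic α,
          lapF n (fun w => (mchoose α β : ℝ) * xmono α β w * V (mcast β) w k) z := by
    refine lap_sum hO (fun β hβ => ?_) hz
    exact ((contDiff_const.mul (contDiff_xmono α β)).contDiffOn).mul
      (hV2 β (Finset.mem_Iic.1 hβ) k)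
  have key : ∀ β ∈ Finset.Iic α,
      lapF n (fun w => (mchoose α β : ℝ) * xmono α β w * V (mcast β) w k) z
        = (mchoose α β : ℝ) * xmono α β z * lapF n (fun w => V (mcast β) w k) z
          + (∑ j : Fin n, 2 * ((mchoose α β : ℝ) * ((α j - β j : ℕ) : ℝ)
              * xmono α (β + Pi.single j 1) z
              * pd n j.castSucc (fun w => V (mcast β) w k) z))
          + (∑ j : Fin n, (mchoose α β : ℝ) * ((α j - β j : ℕ) : ℝ)
              * ((α j - (β j + 1) : ℕ) : ℝ)
              * xmono α (β + Pi.single j 1 + Pi.single j 1) z * V (mcast β) z k) := by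
    intro β hβ
    have h := lap_mul (n := n) (m := fun w => (mchoose α β : ℝ) * xmono α β w)
      (g := fun w => V (mcast β) w k) hO (contDiff_const.mul (contDiff_xmono α β))
      (hV2 β (Finset.mem_Iic.1 hβ) k) hz
    refine h.trans ?_
    rw [cross_sum ((mchoose α β : ℝ)) α β (fun w => V (mcast β) w k) z, lap_cxmono]
    rw [Finset.mul_sum, Finset.sum_mul]
  rw [hsum, Finset.sum_congr rfl key, Finset.sum_add_distrib, Finset.sum_add_distrib]
  -- expand the right-hand side
  have expand : ∀ β ∈ Finset.Iic α,
      (mchoose α β : ℝ) * xmono α β z *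
          (lapF n (fun w => V (mcast β) w k) z
            + ∑ i : Fin n,
                (2 * ((β i).choose 2 : ℝ) * V (mcast β - 2 • Pi.single i 1) z k
                  + 2 * (β i : ℝ) *
                      pd n i.castSucc (fun w => V (mcast β - Pi.single i 1) w k) z))
        = (mchoose α β : ℝ) * xmono α β z * lapF n (fun w => V (mcast β) w k) z
          + ((∑ i : Fin n, (mchoose α β : ℝ) * xmono α β z
                * (2 * ((β i).choose 2 : ℝ) * V (mcast β - 2 • Pi.single i 1) z k))
            + (∑ i : Fin n, (mchoose α β : ℝ) * xmono α β z
                * (2 * (β i : ℝ) *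
                    pd n i.castSucc (fun w => V (mcast β - Pi.single i 1) w k) z))) := by
    intro β _
    rw [mul_add, Finset.mul_sum]
    rw [Finset.sum_congr rfl (fun i _ => mul_add ((mchoose α β : ℝ) * xmono α β z) _ _),
      Finset.sum_add_distrib]
  rw [Finset.sum_congr rfl expand, Finset.sum_add_distrib, Finset.sum_add_distrib]
  rw [add_assoc]
  congr 1
  rw [add_comm]
  congr 1
  -- second-derivative terms
  · rw [Finset.sum_comm]
    conv_rhs => rw [Finset.sum_comm]
    refine Finset.sum_congr rfl fun j _ => ?_
    have h0 : ∀ β, β ≤ α → β j < 2 →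
        (mchoose α β : ℝ) * xmono α β z
          * (2 * ((β j).choose 2 : ℝ) * V (mcast β - 2 • Pi.single j 1) z k) = 0 := by
      intro β _ hlt
      have : (β j).choose 2 = 0 := Nat.choose_eq_zero_of_lt hlt
      rw [this]
      simp
    rw [shift α j 2 (fun β => (mchoose α β : ℝ) * xmono α β z
      * (2 * ((β j).choose 2 : ℝ) * V (mcast β - 2 • Pi.single j 1) z k)) h0]
    refine Finset.sum_congr rfl fun β hβ => ?_
    by_cases hle : β j + 2 ≤ α j
    · rw [if_pos hle]
      have hbj : (β + Pi.single j 2 : Fin n → ℕ) j = β j + 2 := by simp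
      rw [mcast_sub2, hbj]
      rw [show (β + Pi.single j 2 : Fin n → ℕ) = β + Pi.single j 1 + Pi.single j 1 by
        rw [single_two, ← add_assoc]]
      have hnat : mchoose α (β + Pi.single j 1 + Pi.single j 1) * (β j + 2) * (β j + 1)
          = mchoose α β * (α j - β j) * (α j - (β j + 1)) := by
        have n1 := mchoose_succ α β j
        have n2 := mchoose_succ α (β + Pi.single j 1) j
        simp only [Pi.add_apply, Pi.single_eq_same] at n2
        calc mchoose α (β + Pi.single j 1 + Pi.single j 1) * (β j + 2) * (β j + 1)
            = (mchoose α (β + Pi.single j 1 + Pi.single j 1) * (β j + 1 + 1)) * (β j + 1) := by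
              ring
          _ = (mchoose α (β + Pi.single j 1) * (α j - (β j + 1))) * (β j + 1) := by rw [n2]
          _ = (mchoose α (β + Pi.single j 1) * (β j + 1)) * (α j - (β j + 1)) := by ring
          _ = (mchoose α β * (α j - β j)) * (α j - (β j + 1)) := by rw [n1]
          _ = _ := by ring
      have hcc : (mchoose α (β + Pi.single j 1 + Pi.single j 1) : ℝ)
            * ((β j : ℝ) + 2) * ((β j : ℝ) + 1)
          = (mchoose α β : ℝ) * ((α j - β j : ℕ) : ℝ) * ((α j - (β j + 1) : ℕ) : ℝ) := by
        exact_mod_cast hnat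
      have h2c : (2 : ℝ) * (((β j + 2).choose 2 : ℕ) : ℝ)
          = ((β j : ℝ) + 2) * ((β j : ℝ) + 1) := by
        exact_mod_cast choose_two (β j)
      rw [h2c, ← hcc]
      ring
    · rw [if_neg hle]
      have hba : β j ≤ α j := Pi.le_def.1 (Finset.mem_Iic.1 hβ) j
      have h1 : α j - (β j + 1) = 0 := by omega
      rw [h1]
      simp
  -- first-derivative cross terms
  · rw [Finset.sum_comm]
    conv_rhs => rw [Finset.sum_comm]
    refine Finset.sum_congr rfl fun j _ => ?_
    have h0 : ∀ β, β ≤ α → β j < 1 →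
        (mchoose α β : ℝ) * xmono α β z
          * (2 * (β j : ℝ) * pd n j.castSucc (fun w => V (mcast β - Pi.single j 1) w k) z)
          = 0 := by
      intro β _ hlt
      have : β j = 0 := by omega
      rw [this]
      simp
    rw [shift α j 1 (fun β => (mchoose α β : ℝ) * xmono α β z
      * (2 * (β j : ℝ) * pd n j.castSucc (fun w => V (mcast β - Pi.single j 1) w k) z)) h0]
    refine Finset.sum_congr rfl fun β hβ => ?_
    by_cases hle : β j + 1 ≤ α j
    · rw [if_pos hle]
      have hbj : (β + Pi.single j 1 : Fin n → ℕ) j = β j + 1 := by simp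
      rw [mcast_sub1, hbj]
      have hcc : (mchoose α (β + Pi.single j 1) : ℝ) * ((β j : ℝ) + 1)
          = (mchoose α β : ℝ) * ((α j - β j : ℕ) : ℝ) := by
        exact_mod_cast mchoose_succ α β j
      push_cast
      rw [← hcc]
      ring
    · rw [if_neg hle]
      have hba : β j ≤ α j := Pi.le_def.1 (Finset.mem_Iic.1 hβ) j
      have h1 : α j - β j = 0 := by omega
      rw [h1]
      simp
end
end
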